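/- arXiv:1009.4922 — 2 statements merged into one kernel-verified Lean document; each statement's English description precedes it below -/
import Mathlib

section
/- Let p, p̃, A₁,…,A_n, Ã₁,…,Ã_n, B₁,…,B_m, B̃₁,…,B̃_m be two-variable polynomials satisfying the averaged sum-of-squares identity p(z)·conj(p(ζ)) − p̃(z)·conj(p̃(ζ)) = (1 − z₁conj(ζ₁))·(1/2)Σⱼ[Aⱼ(z)conj(Aⱼ(ζ)) + Ãⱼ(z)conj(Ãⱼ(ζ))] + (1 − z₂conj(ζ₂))·(1/2)Σⱼ[Bⱼ(z)conj(Bⱼ(ζ)) + B̃ⱼ(z)conj(B̃ⱼ(ζ))], where Ãⱼ, B̃ⱼ, p̃ are the reflections of Aⱼ, Bⱼ, p at bidegrees (n−1,m), (n,m−1), (n,m) respectively. Then the 'reflected in z alone' identity holds: p̃(z)p(ζ) − p(z)p̃(ζ) = (z₁ − ζ₁)·(1/2)Σⱼ[Ãⱼ(z)Aⱼ(ζ) + Aⱼ(z)Ãⱼ(ζ)] + (z₂ − ζ₂)·(1/2)Σⱼ[B̃ⱼ(z)Bⱼ(ζ) + Bⱼ(z)B̃ⱼ(ζ)] for all z,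 ζ ∈ ℂ² with nonzero coordinates (hence for all z, ζ by polynomiality). -/
open Metric Set Finset

/-- The two-variable polynomial with coefficient matrix `c`, evaluated at `z = (z₁, z₂)`. -/
noncomputable def poly2 {a b : ℕ} (c : Fin a → Fin b → ℂ) (z : ℂ × ℂ) : ℂ :=
  ∑ i : Fin a, ∑ j : Fin b, c i j * z.1 ^ (i : ℕ) * z.2 ^ (j : ℕ)

/-- Coefficient matrix of the reflection `X̃(z) = z₁^(a-1) z₂^(b-1) conj(X(1/z̄₁, 1/z̄₂))`. -/
noncomputable def refl2 {a b : ℕ} (c : Fin a → Fin b → ℂ) : Fin a → Fin b → ℂ :=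
  fun i j => (starRingEnd ℂ) (c i.rev j.rev)

/-!
Evaluate the identity at `(z, ω)`, where `ω = (1 / conj ζ₁, 1 / conj ζ₂)` is the reflection of `ζ`
in the unit torus. For `X` with `a × b` coefficients, `ζ₁ᵃ ζ₂ᵇ conj (X ω) = ζ₁ ζ₂ X̃(ζ)`, so
multiplying through by `ζ₁ⁿ⁺¹ ζ₂ᵐ⁺¹` turns each `X(z) conj (X ω)` into `ζ₁ ζ₂ X(z) X̃(ζ)`, with one
spare factor `ζ₁` on the `A`-terms and `ζ₂` on the `B`-terms; it turns `1 - z₁ / ζ₁` into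
`ζ₁ - z₁` and `1 - z₂ / ζ₂` into `ζ₂ - z₂`. Cancelling `ζ₁ ζ₂` gives the claim.
-/

open ComplexConjugate

noncomputable def torusReflection (ζ : ℂ × ℂ) : ℂ × ℂ :=
  ((conj ζ.1)⁻¹, (conj ζ.2)⁻¹)

lemma refl2_refl2 {a b : ℕ} (c : Fin a → Fin b → ℂ) : refl2 (refl2 c) = c := by
  funext i j; simp [refl2]

lemma pow_mul_inv_pow_of_lt {x : ℂ} (hx : x ≠ 0) {a i : ℕ} (hi : i < a) :
    x ^ a * (x⁻¹) ^ i = x * x ^ (a - (i + 1)) := by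
  rw [inv_pow, ← pow_sub₀ x hx hi.le, ← pow_succ']
  congr 1; omega

/-- Scaled by `ζ₁ ζ₂` so that no truncated subtraction `a - 1` appears. -/
lemma pow_mul_pow_mul_conj_poly2_torusReflection {a b : ℕ} (c : Fin a → Fin b → ℂ)
    {ζ : ℂ × ℂ} (h₁ : ζ.1 ≠ 0) (h₂ : ζ.2 ≠ 0) :
    ζ.1 ^ a * ζ.2 ^ b * conj (poly2 c (torusReflection ζ)) =
      ζ.1 * ζ.2 * poly2 (refl2 c) ζ := by
  simp only [poly2, refl2, torusReflection, map_sum, map_mul, map_pow, map_inv₀,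
    Complex.conj_conj, Finset.mul_sum]
  refine Fintype.sum_equiv Fin.revPerm _ _ fun i => ?_
  refine Fintype.sum_equiv Fin.revPerm _ _ fun j => ?_
  simp only [Fin.revPerm_apply, Fin.rev_rev, Fin.val_rev]
  calc _ = conj (c i j) * (ζ.1 ^ a * ζ.1⁻¹ ^ (i : ℕ)) * (ζ.2 ^ b * ζ.2⁻¹ ^ (j : ℕ)) := by ring
    _ = _ := by rw [pow_mul_inv_pow_of_lt h₁ i.isLt, pow_mul_inv_pow_of_lt h₂ j.isLt]; ring

lemma pow_mul_pow_mul_sum_hermitian_torusReflection {ι : Type*} (s : Finset ι) {a b : ℕ}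
    (X : ι → Fin a → Fin b → ℂ) (z : ℂ × ℂ) {ζ : ℂ × ℂ} (h₁ : ζ.1 ≠ 0) (h₂ : ζ.2 ≠ 0) :
    ζ.1 ^ a * ζ.2 ^ b * ∑ j ∈ s, (poly2 (X j) z * conj (poly2 (X j) (torusReflection ζ)) +
        poly2 (refl2 (X j)) z * conj (poly2 (refl2 (X j)) (torusReflection ζ))) =
      ζ.1 * ζ.2 * ∑ j ∈ s, (poly2 (refl2 (X j)) z * poly2 (X j) ζ +
        poly2 (X j) z * poly2 (refl2 (X j)) ζ) := by
  simp only [Finset.mul_sum]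
  refine Finset.sum_congr rfl fun j _ => ?_
  have hX := pow_mul_pow_mul_conj_poly2_torusReflection (X j) h₁ h₂
  have hX' := pow_mul_pow_mul_conj_poly2_torusReflection (refl2 (X j)) h₁ h₂
  rw [refl2_refl2] at hX'
  linear_combination poly2 (X j) z * hX + poly2 (refl2 (X j)) z * hX'

/-- Reflecting the averaged sum-of-squares identity (3) in `z` alone yields identity (4). -/
theorem sos_reflect_in_z (n m : ℕ)
    (p : Fin (n + 1) → Fin (m + 1) → ℂ)
    (A : Fin n → Fin n → Fin (m + 1) → ℂ)
    (B : Fin m → Fin (n + 1) → Fin m → ℂ)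
    (hsos : ∀ z ζ : ℂ × ℂ,
      poly2 p z * (starRingEnd ℂ) (poly2 p ζ) -
        poly2 (refl2 p) z * (starRingEnd ℂ) (poly2 (refl2 p) ζ) =
      (1 - z.1 * (starRingEnd ℂ) ζ.1) * ((1 / 2 : ℂ) *
          ∑ j : Fin n, (poly2 (A j) z * (starRingEnd ℂ) (poly2 (A j) ζ) +
            poly2 (refl2 (A j)) z * (starRingEnd ℂ) (poly2 (refl2 (A j)) ζ))) +
      (1 - z.2 * (starRingEnd ℂ) ζ.2) * ((1 / 2 : ℂ) *
          ∑ j : Fin m, (poly2 (B j) z * (starRingEnd ℂ) (poly2 (B j) ζ) +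
            poly2 (refl2 (B j)) z * (starRingEnd ℂ) (poly2 (refl2 (B j)) ζ)))) :
    ∀ z ζ : ℂ × ℂ, z.1 ≠ 0 → z.2 ≠ 0 → ζ.1 ≠ 0 → ζ.2 ≠ 0 →
      poly2 (refl2 p) z * poly2 p ζ - poly2 p z * poly2 (refl2 p) ζ =
      (z.1 - ζ.1) * ((1 / 2 : ℂ) *
          ∑ j : Fin n, (poly2 (refl2 (A j)) z * poly2 (A j) ζ +
            poly2 (A j) z * poly2 (refl2 (A j)) ζ)) +
      (z.2 - ζ.2) * ((1 / 2 : ℂ) *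
          ∑ j : Fin m, (poly2 (refl2 (B j)) z * poly2 (B j) ζ +
            poly2 (B j) z * poly2 (refl2 (B j)) ζ)) := by
  intro z ζ _ _ h₁ h₂
  have H := hsos z (torusReflection ζ)
  have hp := pow_mul_pow_mul_conj_poly2_torusReflection p h₁ h₂
  have hp' := pow_mul_pow_mul_conj_poly2_torusReflection (refl2 p) h₁ h₂
  rw [refl2_refl2] at hp'
  have hA := pow_mul_pow_mul_sum_hermitian_torusReflection univ A z h₁ h₂
  have hB := pow_mul_pow_mul_sum_hermitian_torusReflection univ B z h₁ h₂
  simp only [torusReflection, map_inv₀, Complex.conj_conj] at H hp hp' hA hB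
  refine mul_left_cancel₀ (mul_ne_zero h₁ h₂) ?_
  linear_combination (norm := skip) poly2 p z * hp - poly2 (refl2 p) z * hp'
    - ζ.1 ^ (n + 1) * ζ.2 ^ (m + 1) * H + (z.1 - ζ.1) / 2 * hA + (z.2 - ζ.2) / 2 * hB
  field_simp
  ring
end

section
/- Let F : D^{n+1} → D be holomorphic with F(z₀,w₀) = w₀ and |∂F/∂w (z₀,w₀)| = 1. Then there is an automorphism φ of D such that F(z,w) = φ(w) for all (z,w) ∈ D^{n+1}. -/
/-
Conjugating every slice `F (z, ·)` by the Möbius map sending `w₀` to `0` reduces to slices `g z`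
of the unit disk with `g z₀ 0 = 0` and `‖(g z₀)' 0‖ = 1`. By the Schwarz–Pick bound
`‖(g z)' 0‖ ≤ 1 - ‖g z 0‖ ^ 2 ≤ 1`, the function `z ↦ (g z)' 0`, which is holomorphic as a uniform
limit of difference quotients, attains its maximal modulus at `z₀`; by the maximum modulus principle
on complex lines it is a unimodular constant `c`. The equality case of the Schwarz lemma then gives
`g z w = c * w` for every `z`, i.e. `F (z, ·)` is the automorphism conjugate to the rotation by `c`.
-/

open Metric Set

/-- The open unit polydisk in `ℂⁿ`. -/
def polyDisk (n : ℕ) : Set (Fin n → ℂ) := {z | ∀ i, ‖z i‖ < 1}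

/-- `φ` is a holomorphic automorphism of the unit disk. -/
def IsDiskAut (φ : ℂ → ℂ) : Prop :=
  DifferentiableOn ℂ φ (ball (0 : ℂ) 1) ∧
  MapsTo φ (ball (0 : ℂ) 1) (ball (0 : ℂ) 1) ∧
  ∃ ψ : ℂ → ℂ, DifferentiableOn ℂ ψ (ball (0 : ℂ) 1) ∧
    MapsTo ψ (ball (0 : ℂ) 1) (ball (0 : ℂ) 1) ∧
    (∀ w ∈ ball (0 : ℂ) 1, ψ (φ w) = w) ∧
    (∀ w ∈ ball (0 : ℂ) 1, φ (ψ w) = w)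

open ComplexConjugate

noncomputable def mobius (a w : ℂ) : ℂ := (w - a) / (1 - conj a * w)

section Mobius

variable {a w : ℂ}

lemma one_sub_conj_mul_ne_zero (ha : ‖a‖ < 1) (hw : ‖w‖ < 1) : 1 - conj a * w ≠ 0 := by
  refine sub_ne_zero.mpr fun h => ?_
  have : ‖conj a * w‖ < 1 := by
    rw [norm_mul, RCLike.norm_conj]
    exact mul_lt_one_of_nonneg_of_lt_one_left (norm_nonneg a) ha hw.le
  rw [← h, norm_one] at this
  exact this.false

lemma norm_one_sub_conj_mul_self (ha : ‖a‖ < 1) : ‖1 - conj a * a‖ = 1 - ‖a‖ ^ 2 := by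
  rw [Complex.conj_mul', ← Complex.ofReal_pow, ← Complex.ofReal_one, ← Complex.ofReal_sub,
    Complex.norm_real, Real.norm_of_nonneg]
  nlinarith [norm_nonneg a]

lemma normSq_one_sub_conj_mul_sub_normSq_sub (a w : ℂ) :
    Complex.normSq (1 - conj a * w) - Complex.normSq (w - a)
      = (1 - Complex.normSq a) * (1 - Complex.normSq w) := by
  simp only [Complex.normSq_apply, Complex.sub_re, Complex.sub_im, Complex.mul_re,
    Complex.mul_im, Complex.conj_re, Complex.conj_im, Complex.one_re, Complex.one_im]
  ring

lemma norm_mobius_lt_one (ha : ‖a‖ < 1) (hw : ‖w‖ < 1) : ‖mobius a w‖ < 1 := by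
  have hpos : 0 < (1 - Complex.normSq a) * (1 - Complex.normSq w) := by
    rw [← Complex.sq_norm, ← Complex.sq_norm]
    apply mul_pos <;> nlinarith [norm_nonneg a, norm_nonneg w]
  have hsq : ‖w - a‖ ^ 2 < ‖1 - conj a * w‖ ^ 2 := by
    rw [Complex.sq_norm, Complex.sq_norm]
    linarith [normSq_one_sub_conj_mul_sub_normSq_sub a w]
  rw [mobius, norm_div, div_lt_one (norm_pos_iff.mpr (one_sub_conj_mul_ne_zero ha hw))]
  exact (pow_lt_pow_iff_left₀ (norm_nonneg _) (norm_nonneg _) two_ne_zero).mp hsq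

lemma mapsTo_mobius (ha : ‖a‖ < 1) : MapsTo (mobius a) (ball 0 1) (ball 0 1) := fun _ hw => by
  rw [mem_ball_zero_iff] at hw ⊢
  exact norm_mobius_lt_one ha hw

lemma hasDerivAt_mobius (hw : 1 - conj a * w ≠ 0) :
    HasDerivAt (mobius a) ((1 - conj a * a) / (1 - conj a * w) ^ 2) w := by
  have hnum : HasDerivAt (fun w => w - a) 1 w := (hasDerivAt_id w).sub_const a
  have hden : HasDerivAt (fun w => 1 - conj a * w) (-conj a) w := by
    simpa using ((hasDerivAt_id w).const_mul (conj a)).const_sub 1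
  exact (hnum.div hden hw).congr_deriv (by ring)

lemma differentiableOn_mobius (ha : ‖a‖ < 1) : DifferentiableOn ℂ (mobius a) (ball 0 1) :=
  fun _ hw => (hasDerivAt_mobius (one_sub_conj_mul_ne_zero ha
    (mem_ball_zero_iff.mp hw))).differentiableAt.differentiableWithinAt

lemma hasDerivAt_mobius_self (ha : ‖a‖ < 1) : HasDerivAt (mobius a) (1 - conj a * a)⁻¹ a := by
  have h := one_sub_conj_mul_ne_zero ha ha
  exact (hasDerivAt_mobius h).congr_deriv (by field_simp)

lemma hasDerivAt_mobius_neg_zero (a : ℂ) : HasDerivAt (mobius (-a)) (1 - conj a * a) 0 :=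
  (hasDerivAt_mobius (by simp)).congr_deriv (by simp)

@[simp] lemma mobius_self (a : ℂ) : mobius a a = 0 := by simp [mobius]

@[simp] lemma mobius_neg_zero (a : ℂ) : mobius (-a) 0 = a := by simp [mobius]

lemma mobius_neg_mobius (ha : ‖a‖ < 1) (hw : ‖w‖ < 1) : mobius (-a) (mobius a w) = w := by
  have h₁ := one_sub_conj_mul_ne_zero ha hw
  have h₂ := one_sub_conj_mul_ne_zero ha ha
  have h₁' : 1 - w * conj a ≠ 0 := by rwa [mul_comm]
  have hden : 1 - conj (-a) * mobius a w = (1 - conj a * a) / (1 - conj a * w) := by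
    rw [mobius, map_neg]
    field_simp
    ring
  rw [mobius, hden, eq_comm, eq_div_iff (div_ne_zero h₂ h₁), mobius]
  field_simp
  ring

end Mobius

noncomputable def mobiusConj (a : ℂ) (h : ℂ → ℂ) : ℂ → ℂ := mobius a ∘ h ∘ mobius (-a)

section MobiusConj

variable {a : ℂ} {h : ℂ → ℂ}

lemma differentiableOn_mobiusConj (ha : ‖a‖ < 1) (hd : DifferentiableOn ℂ h (ball 0 1))
    (hm : MapsTo h (ball 0 1) (ball 0 1)) : DifferentiableOn ℂ (mobiusConj a h) (ball 0 1) := by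
  have ha' : ‖-a‖ < 1 := by rwa [norm_neg]
  exact (differentiableOn_mobius ha).comp (hd.comp (differentiableOn_mobius ha')
    (mapsTo_mobius ha')) (hm.comp (mapsTo_mobius ha'))

lemma mapsTo_mobiusConj (ha : ‖a‖ < 1) (hm : MapsTo h (ball 0 1) (ball 0 1)) :
    MapsTo (mobiusConj a h) (ball 0 1) (ball 0 1) :=
  (mapsTo_mobius ha).comp (hm.comp (mapsTo_mobius (by rwa [norm_neg])))

lemma deriv_mobiusConj (ha : ‖a‖ < 1) (hd : DifferentiableAt ℂ h a) (hfix : h a = a) :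
    deriv (mobiusConj a h) 0 = deriv h a := by
  have hinner : HasDerivAt (h ∘ mobius (-a)) (deriv h a * (1 - conj a * a)) 0 := by
    refine HasDerivAt.comp 0 ?_ (hasDerivAt_mobius_neg_zero a)
    rw [mobius_neg_zero]
    exact hd.hasDerivAt
  have houter : HasDerivAt (mobius a) (1 - conj a * a)⁻¹ ((h ∘ mobius (-a)) 0) := by
    rw [Function.comp_apply, mobius_neg_zero, hfix]
    exact hasDerivAt_mobius_self ha
  rw [mobiusConj, (houter.comp 0 hinner).deriv]
  field_simp [one_sub_conj_mul_ne_zero ha ha]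

lemma mobius_neg_mobiusConj_mobius (ha : ‖a‖ < 1) (hm : MapsTo h (ball 0 1) (ball 0 1))
    {w : ℂ} (hw : w ∈ ball 0 1) : mobius (-a) (mobiusConj a h (mobius a w)) = h w := by
  simp only [mobiusConj, Function.comp_apply, mobius_neg_mobius ha (mem_ball_zero_iff.mp hw),
    mobius_neg_mobius ha (mem_ball_zero_iff.mp (hm hw))]

end MobiusConj

lemma isDiskAut_mobius {a : ℂ} (ha : ‖a‖ < 1) : IsDiskAut (mobius a) := by
  have ha' : ‖-a‖ < 1 := by rwa [norm_neg]
  refine ⟨differentiableOn_mobius ha, mapsTo_mobius ha, mobius (-a), differentiableOn_mobius ha',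
    mapsTo_mobius ha', fun w hw => mobius_neg_mobius ha (mem_ball_zero_iff.mp hw), fun w hw => ?_⟩
  simpa using mobius_neg_mobius ha' (mem_ball_zero_iff.mp hw)

lemma isDiskAut_const_mul {c : ℂ} (hc : ‖c‖ = 1) : IsDiskAut (c * ·) := by
  have hc₀ : c ≠ 0 := norm_ne_zero_iff.mp (by rw [hc]; exact one_ne_zero)
  have rotate : ∀ {c : ℂ}, ‖c‖ = 1 → MapsTo (c * ·) (ball (0 : ℂ) 1) (ball 0 1) :=
    fun hc w hw => by simpa [hc] using hw
  refine ⟨(differentiable_id.const_mul c).differentiableOn, rotate hc, (c⁻¹ * ·),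
    (differentiable_id.const_mul _).differentiableOn, rotate (by rw [norm_inv, hc, inv_one]),
    fun w _ => inv_mul_cancel_left₀ hc₀ w, fun w _ => mul_inv_cancel_left₀ hc₀ w⟩

lemma IsDiskAut.comp {φ ψ : ℂ → ℂ} (hφ : IsDiskAut φ) (hψ : IsDiskAut ψ) : IsDiskAut (φ ∘ ψ) := by
  obtain ⟨hφd, hφm, φ', hφ'd, hφ'm, hφ'φ, hφφ'⟩ := hφ
  obtain ⟨hψd, hψm, ψ', hψ'd, hψ'm, hψ'ψ, hψψ'⟩ := hψ
  refine ⟨hφd.comp hψd hψm, hφm.comp hψm, ψ' ∘ φ', hψ'd.comp hφ'd hφ'm, hψ'm.comp hφ'm,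
    fun w hw => ?_, fun w hw => ?_⟩
  · simp only [Function.comp_apply, hφ'φ _ (hψm hw), hψ'ψ w hw]
  · simp only [Function.comp_apply, hψψ' _ (hφ'm hw), hφφ' w hw]

section SchwarzPick

variable {h : ℂ → ℂ}

lemma norm_deriv_le_one_sub_sq_of_mapsTo_ball (hd : DifferentiableOn ℂ h (ball 0 1))
    (hm : MapsTo h (ball 0 1) (ball 0 1)) : ‖deriv h 0‖ ≤ 1 - ‖h 0‖ ^ 2 := by
  have ha : ‖h 0‖ < 1 := mem_ball_zero_iff.mp (hm (mem_ball_self one_pos))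
  have hpos : 0 < 1 - ‖h 0‖ ^ 2 := by nlinarith [norm_nonneg (h 0)]
  -- `mobius (h 0) ∘ h` fixes the origin, so the classical Schwarz lemma applies to it.
  have hk : HasDerivAt (mobius (h 0) ∘ h) ((1 - conj (h 0) * h 0)⁻¹ * deriv h 0) 0 :=
    (hasDerivAt_mobius_self ha).comp 0
      (hd.differentiableAt (ball_mem_nhds 0 one_pos)).hasDerivAt
  have hk_maps :
      MapsTo (mobius (h 0) ∘ h) (ball 0 1) (closedBall ((mobius (h 0) ∘ h) 0) 1) := by
    simpa using ((mapsTo_mobius ha).comp hm).mono_right ball_subset_closedBall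
  have hk_le := Complex.norm_deriv_le_one_of_mapsTo_ball
    ((differentiableOn_mobius ha).comp hd hm) hk_maps one_pos
  rw [hk.deriv, norm_mul, norm_inv, norm_one_sub_conj_mul_self ha, inv_mul_le_iff₀ hpos,
    mul_one] at hk_le
  exact hk_le

lemma norm_deriv_le_one_of_mapsTo_unitBall (hd : DifferentiableOn ℂ h (ball 0 1))
    (hm : MapsTo h (ball 0 1) (ball 0 1)) : ‖deriv h 0‖ ≤ 1 :=
  (norm_deriv_le_one_sub_sq_of_mapsTo_ball hd hm).trans (by simp)

lemma eqOn_mul_of_norm_deriv_eq_one (hd : DifferentiableOn ℂ h (ball 0 1))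
    (hm : MapsTo h (ball 0 1) (ball 0 1)) (h₁ : ‖deriv h 0‖ = 1) :
    EqOn h (deriv h 0 * ·) (ball 0 1) := by
  have h₀ : h 0 = 0 := by
    have := norm_deriv_le_one_sub_sq_of_mapsTo_ball hd hm
    rw [h₁] at this
    exact norm_eq_zero.mp (by nlinarith [norm_nonneg (h 0)])
  have hm' : MapsTo h (ball 0 1) (closedBall (h 0) 1) := by
    simpa [h₀] using hm.mono_right ball_subset_closedBall
  intro w hw
  simpa [h₀, mul_comm] using Complex.affine_of_mapsTo_ball_of_norm_dslope_eq_div hd hm'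
    (mem_ball_self one_pos) (by simpa using h₁) hw

end SchwarzPick

section Parametric

open Filter Topology

lemma norm_dslope_sub_deriv_le {h : ℂ → ℂ} (hd : DifferentiableOn ℂ h (ball 0 1))
    (hm : MapsTo h (ball 0 1) (ball 0 1)) {t : ℂ} (ht : t ∈ ball (0 : ℂ) 1) :
    ‖dslope h 0 t - deriv h 0‖ ≤ 4 * ‖t‖ := by
  -- Schwarz bounds `dslope h 0` by `2`; applied once more, to `dslope h 0`, it gives the slope `4`.
  have hdd : DifferentiableOn ℂ (dslope h 0) (ball 0 1) :=
    (Complex.differentiableOn_dslope (ball_mem_nhds 0 one_pos)).mpr hd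
  have hm₂ : MapsTo h (ball 0 1) (closedBall (h 0) 2) := fun w hw => by
    have hw₁ := mem_ball.mp (hm hw)
    have h₀₁ := mem_ball.mp (hm (mem_ball_self one_pos))
    rw [mem_closedBall]
    linarith [dist_triangle_right (h w) (h 0) 0]
  have hbound : ∀ w ∈ ball (0 : ℂ) 1, ‖dslope h 0 w‖ ≤ 2 := fun w hw => by
    simpa using Complex.norm_dslope_le_div_of_mapsTo_ball hd hm₂ hw
  have hm₄ : MapsTo (dslope h 0) (ball 0 1) (closedBall (dslope h 0 0) 4) := fun w hw => by
    rw [mem_closedBall, dist_eq_norm]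
    linarith [norm_sub_le (dslope h 0 w) (dslope h 0 0), hbound w hw,
      hbound 0 (mem_ball_self one_pos)]
  simpa [dist_eq_norm] using Complex.dist_le_div_mul_dist_of_mapsTo_ball hdd hm₄ ht

variable {U : Set ℂ} {G : ℂ → ℂ → ℂ}

theorem differentiableOn_deriv_of_mapsTo_unitBall (hU : IsOpen U)
    (hGd : ∀ l ∈ U, DifferentiableOn ℂ (G l) (ball 0 1))
    (hGm : ∀ l ∈ U, MapsTo (G l) (ball 0 1) (ball 0 1))
    (hGl : ∀ w ∈ ball (0 : ℂ) 1, DifferentiableOn ℂ (G · w) U) :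
    DifferentiableOn ℂ (fun l => deriv (G l) 0) U := by
  have hunif : TendstoUniformlyOn (fun t l => dslope (G l) 0 t) (fun l => deriv (G l) 0)
      (𝓝[≠] 0) U := by
    refine Metric.tendstoUniformlyOn_iff.mpr fun ε hε => ?_
    filter_upwards [mem_nhdsWithin_of_mem_nhds (ball_mem_nhds (0 : ℂ) (lt_min one_pos
      (div_pos hε four_pos)))] with t ht l hl
    have ht₁ : ‖t‖ < min 1 (ε / 4) := mem_ball_zero_iff.mp ht
    rw [dist_comm, dist_eq_norm]
    calc ‖dslope (G l) 0 t - deriv (G l) 0‖ ≤ 4 * ‖t‖ :=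
          norm_dslope_sub_deriv_le (hGd l hl) (hGm l hl)
            (mem_ball_zero_iff.mpr (ht₁.trans_le (min_le_left _ _)))
      _ < ε := by linarith [min_le_right 1 (ε / 4)]
  refine hunif.tendstoLocallyUniformlyOn.differentiableOn ?_ hU
  filter_upwards [self_mem_nhdsWithin,
    mem_nhdsWithin_of_mem_nhds (ball_mem_nhds (0 : ℂ) one_pos)] with t ht₀ ht
  simp only [dslope_of_ne _ ht₀, slope_def_module, sub_zero]
  exact ((hGl t ht).sub (hGl 0 (mem_ball_self one_pos))).const_smul t⁻¹

theorem eqOn_mul_of_norm_deriv_eq_one_of_isPreconnected (hU : IsOpen U)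
    (hU' : IsPreconnected U)
    (hGd : ∀ l ∈ U, DifferentiableOn ℂ (G l) (ball 0 1))
    (hGm : ∀ l ∈ U, MapsTo (G l) (ball 0 1) (ball 0 1))
    (hGl : ∀ w ∈ ball (0 : ℂ) 1, DifferentiableOn ℂ (G · w) U) {l₀ : ℂ} (hl₀ : l₀ ∈ U)
    (h₁ : ‖deriv (G l₀) 0‖ = 1) {l : ℂ} (hl : l ∈ U) :
    EqOn (G l) (deriv (G l₀) 0 * ·) (ball 0 1) := by
  have hmax : IsMaxOn (fun l => ‖deriv (G l) 0‖) U l₀ := isMaxOn_iff.mpr fun l hl =>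
    h₁ ▸ norm_deriv_le_one_of_mapsTo_unitBall (hGd l hl) (hGm l hl)
  have hconst : deriv (G l) 0 = deriv (G l₀) 0 :=
    Complex.eqOn_of_isPreconnected_of_isMaxOn_norm hU' hU
      (differentiableOn_deriv_of_mapsTo_unitBall hU hGd hGm hGl) hl₀ hmax hl
  rw [← hconst]
  exact eqOn_mul_of_norm_deriv_eq_one (hGd l hl) (hGm l hl) (hconst ▸ h₁)

end Parametric

theorem eqOn_mul_of_norm_deriv_eq_one_of_convex {E : Type*} [NormedAddCommGroup E]
    [NormedSpace ℂ E] {U : Set E} (hU : IsOpen U) (hU' : Convex ℝ U) {G : E → ℂ → ℂ}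
    (hGd : ∀ z ∈ U, DifferentiableOn ℂ (G z) (ball 0 1))
    (hGm : ∀ z ∈ U, MapsTo (G z) (ball 0 1) (ball 0 1))
    (hGz : ∀ w ∈ ball (0 : ℂ) 1, DifferentiableOn ℂ (G · w) U) {z₀ : E} (hz₀ : z₀ ∈ U)
    (h₁ : ‖deriv (G z₀) 0‖ = 1) {z : E} (hz : z ∈ U) :
    EqOn (G z) (deriv (G z₀) 0 * ·) (ball 0 1) := by
  set L : ℂ → E := fun l => z₀ + l • (z - z₀)
  have hL : Differentiable ℂ L := by fun_prop
  have hL₀ : L 0 = z₀ := by simp [L]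
  have hL₁ : L 1 = z := by simp [L]
  have hconvex : Convex ℝ (L ⁻¹' U) := by
    intro a ha b hb s t hs ht hst
    have hcomb : L (s • a + t • b) = s • L a + t • L b := by
      simp only [L]
      rw [Complex.real_smul, Complex.real_smul]
      linear_combination (norm := module) -(hst • z₀)
    rw [mem_preimage, hcomb]
    exact hU' ha hb hs ht hst
  have hline := eqOn_mul_of_norm_deriv_eq_one_of_isPreconnected (G := fun l => G (L l))
    (hU.preimage hL.continuous) hconvex.isPreconnected (fun l hl => hGd _ hl)
    (fun l hl => hGm _ hl)
    (fun w hw => (hGz w hw).comp hL.differentiableOn (mapsTo_preimage L U))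
    (l₀ := 0) (by rwa [mem_preimage, hL₀]) (by rwa [hL₀]) (l := 1)
    (by rwa [mem_preimage, hL₁])
  simpa only [hL₀, hL₁] using hline

lemma polyDisk_eq_pi (n : ℕ) : polyDisk n = univ.pi fun _ => ball (0 : ℂ) 1 := by
  ext z
  simp [polyDisk]

lemma isOpen_polyDisk (n : ℕ) : IsOpen (polyDisk n) := by
  rw [polyDisk_eq_pi]
  exact isOpen_set_pi finite_univ fun _ _ => isOpen_ball

lemma convex_polyDisk (n : ℕ) : Convex ℝ (polyDisk n) := by
  rw [polyDisk_eq_pi]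
  exact convex_pi fun _ _ => convex_ball 0 1

theorem deriv_eq_one_implies_automorphism (n : ℕ)
    (F : (Fin n → ℂ) × ℂ → ℂ)
    (hF : DifferentiableOn ℂ F (polyDisk n ×ˢ ball (0 : ℂ) 1))
    (hmap : MapsTo F (polyDisk n ×ˢ ball (0 : ℂ) 1) (ball (0 : ℂ) 1))
    (z₀ : Fin n → ℂ) (w₀ : ℂ) (hz₀ : z₀ ∈ polyDisk n) (hw₀ : w₀ ∈ ball (0 : ℂ) 1)
    (hfix : F (z₀, w₀) = w₀)
    (hder : ‖deriv (fun w => F (z₀, w)) w₀‖ = 1) :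
    ∃ φ : ℂ → ℂ, IsDiskAut φ ∧
      ∀ z ∈ polyDisk n, ∀ w ∈ ball (0 : ℂ) 1, F (z, w) = φ w := by
  have hw₀' : ‖w₀‖ < 1 := mem_ball_zero_iff.mp hw₀
  have hslice_diff : ∀ z ∈ polyDisk n, DifferentiableOn ℂ (fun w => F (z, w)) (ball 0 1) :=
    fun z hz => hF.comp (differentiableOn_const z |>.prodMk differentiableOn_id)
      fun w hw => mk_mem_prod hz hw
  have hslice_maps : ∀ z ∈ polyDisk n, MapsTo (fun w => F (z, w)) (ball 0 1) (ball 0 1) :=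
    fun z hz w hw => hmap (mk_mem_prod hz hw)
  set g : (Fin n → ℂ) → ℂ → ℂ := fun z => mobiusConj w₀ fun w => F (z, w)
  have hgz : ∀ w ∈ ball (0 : ℂ) 1, DifferentiableOn ℂ (g · w) (polyDisk n) := fun w hw => by
    have hw' := mapsTo_mobius (a := -w₀) (by rwa [norm_neg]) hw
    exact (differentiableOn_mobius hw₀').comp (hF.comp
      (differentiableOn_id.prodMk (differentiableOn_const _)) fun z hz => mk_mem_prod hz hw')
      fun z hz => hmap (mk_mem_prod hz hw')
  have hg₁ : ‖deriv (g z₀) 0‖ = 1 := by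
    rwa [deriv_mobiusConj hw₀'
      ((hslice_diff z₀ hz₀).differentiableAt (isOpen_ball.mem_nhds hw₀)) hfix]
  refine ⟨mobius (-w₀) ∘ (deriv (g z₀) 0 * ·) ∘ mobius w₀,
    ((isDiskAut_mobius (by rwa [norm_neg])).comp (isDiskAut_const_mul hg₁)).comp
      (isDiskAut_mobius hw₀'), fun z hz w hw => ?_⟩
  have hgzw : g z (mobius w₀ w) = deriv (g z₀) 0 * mobius w₀ w :=
    eqOn_mul_of_norm_deriv_eq_one_of_convex (isOpen_polyDisk n) (convex_polyDisk n)
      (fun z hz => differentiableOn_mobiusConj hw₀' (hslice_diff z hz) (hslice_maps z hz))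
      (fun z hz => mapsTo_mobiusConj hw₀' (hslice_maps z hz)) hgz hz₀ hg₁ hz
      (mapsTo_mobius hw₀' hw)
  rw [Function.comp_apply, Function.comp_apply, ← hgzw,
    mobius_neg_mobiusConj_mobius hw₀' (hslice_maps z hz) hw]
end
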